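/- Let m ≥ 1, n ≥ 1 and let Ω ∈ L^1(S^{mn-1}). Then there exists a constant C = C(m, n, η) such that for every integer j ≥ 0, ∫_{ℝ^{mn}} |K^0_j(y)| · ∏_{i=1}^m log(2 + |y_i|) dy ≤ C · ‖Ω‖_{L^1(S^{mn-1})}, where y = (y_1,…,y_m) with y_i ∈ ℝ^n. -/

import Mathlib

open MeasureTheory Finset Metric
open scoped FourierTransform ENNReal NNReal RealInnerProductSpace

noncomputable section

abbrev En (n : ℕ) : Type := EuclideanSpace ℝ (Fin n)
abbrev Emn (m n : ℕ) : Type := EuclideanSpace ℝ (Fin m × Fin n)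

/-- The surface measure on the unit sphere `S^{mn-1}` of `ℝ^{mn}`,
viewed as a measure on the ambient space supported on the sphere. -/
def sphereMeasure (m n : ℕ) : Measure (Emn m n) :=
  Measure.map Subtype.val (volume : Measure (Emn m n)).toSphere

/-- Packing of an `m`-tuple of vectors of `ℝⁿ` into a vector of `ℝ^{mn}`. -/
def pack (m n : ℕ) (y : Fin m → En n) : Emn m n :=
  (EuclideanSpace.equiv (Fin m × Fin n) ℝ).symm (fun p => y p.1 p.2)

/-- The `i`-th `ℝⁿ` component of a vector of `ℝ^{mn}`. -/
def comp (m n : ℕ) (y : Emn m n) (i : Fin m) : En n :=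
  (EuclideanSpace.equiv (Fin n) ℝ).symm (fun a => y (i, a))

/-- The homogeneous kernel `K(y) = Ω(y/|y|) |y|^{-mn}`. -/
def kernel (m n : ℕ) (Ω : Emn m n → ℝ) (y : Emn m n) : ℝ :=
  Ω (‖y‖⁻¹ • y) * ‖y‖ ^ (-((m * n : ℕ) : ℝ))

/-- The truncated multilinear singular integral operator `T^{ε,R}_Ω`. -/
def truncT (m n : ℕ) (Ω : Emn m n → ℝ) (ε R : ℝ) (f : Fin m → En n → ℝ) (x : En n) : ℝ :=
  ∫ y : Fin m → En n in
    {y | ε < ‖pack m n (fun i => x - y i)‖ ∧ ‖pack m n (fun i => x - y i)‖ < R},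
    kernel m n Ω (pack m n (fun i => x - y i)) * ∏ i, f i (y i)


/-- `β̂(ξ) = η̂(ξ) - η̂(2ξ)`, the Fourier transform of the Littlewood–Paley bump `β`. -/
def betaHat (m n : ℕ) (η : SchwartzMap (Emn m n) ℂ) (ξ : Emn m n) : ℂ :=
  𝓕 (⇑η) ξ - 𝓕 (⇑η) ((2 : ℝ) • ξ)

/-- `K^i(y) = K(y) β̂(2^{-i} y)`. -/
def Ki (m n : ℕ) (Ω : Emn m n → ℝ) (η : SchwartzMap (Emn m n) ℂ) (i : ℤ)
    (y : Emn m n) : ℂ :=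
  (kernel m n Ω y : ℂ) * betaHat m n η ((2 : ℝ) ^ (-i) • y)

/-- The multiplier `m_j(ξ) = Σ_{i∈ℤ} K̂^i(ξ) β̂(2^{i-j} ξ)`. -/
def multiplier (m n : ℕ) (Ω : Emn m n → ℝ) (η : SchwartzMap (Emn m n) ℂ) (j : ℤ)
    (ξ : Emn m n) : ℂ :=
  ∑' i : ℤ, 𝓕 (Ki m n Ω η i) ξ * betaHat m n η ((2 : ℝ) ^ (i - j) • ξ)

/-- The Littlewood–Paley piece `T_j` of the multilinear singular integral operator,
acting on Schwartz functions `f₁, …, f_m` on `ℝⁿ`. -/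
def Tj (m n : ℕ) (Ω : Emn m n → ℝ) (η : SchwartzMap (Emn m n) ℂ) (j : ℤ)
    (f : Fin m → SchwartzMap (En n) ℂ) (x : En n) : ℂ :=
  ∫ ξ : Fin m → En n,
    multiplier m n Ω η j (pack m n ξ) * (∏ i, 𝓕 (⇑(f i)) (ξ i)) *
      Complex.exp (2 * Real.pi * Complex.I * ((inner ℝ x (∑ i, ξ i) : ℝ) : ℂ))

section AuxLemmas

lemma norm_comp_le (m n : ℕ) (y : Emn m n) (i : Fin m) : ‖comp m n y i‖ ≤ ‖y‖ := by
  rw [EuclideanSpace.norm_eq, EuclideanSpace.norm_eq]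
  apply Real.sqrt_le_sqrt
  have h : ∀ a : Fin n, comp m n y i a = y (i, a) := fun a => rfl
  calc ∑ a : Fin n, ‖comp m n y i a‖ ^ 2 = ∑ a : Fin n, ‖y (i, a)‖ ^ 2 := by simp [h]
    _ ≤ ∑ p : Fin m × Fin n, ‖y p‖ ^ 2 := by
        rw [Fintype.sum_prod_type]
        exact Finset.single_le_sum (f := fun i' => ∑ a : Fin n, ‖y (i', a)‖ ^ 2)
          (fun i' _ => Finset.sum_nonneg fun a _ => sq_nonneg _) (Finset.mem_univ i)

lemma nontrivial_Emn {m n : ℕ} (hm : 1 ≤ m) (hn : 1 ≤ n) : Nontrivial (Emn m n) := by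
  have : Nonempty (Fin m × Fin n) := ⟨(⟨0, hm⟩, ⟨0, hn⟩)⟩
  infer_instance

lemma lintegral_polar {m n : ℕ} (hm : 1 ≤ m) (hn : 1 ≤ n) (f : Emn m n → ℝ≥0∞) (g : ℝ → ℝ≥0∞)
    (hf : AEMeasurable (fun θ : Metric.sphere (0 : Emn m n) 1 => f θ)
      (volume : Measure (Emn m n)).toSphere)
    (hg : Measurable g) :
    ∫⁻ z : Emn m n, f (‖z‖⁻¹ • z) * g ‖z‖ =
      (∫⁻ θ : Metric.sphere (0 : Emn m n) 1, f θ ∂(volume : Measure (Emn m n)).toSphere) *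
        ∫⁻ r : Set.Ioi (0 : ℝ), g r
          ∂(Measure.volumeIoiPow (Module.finrank ℝ (Emn m n) - 1)) := by
  haveI := nontrivial_Emn hm hn
  have h0 : MeasurableSet ({0}ᶜ : Set (Emn m n)) := (measurableSet_singleton 0).compl
  have key := (volume : Measure (Emn m n)).measurePreserving_homeomorphUnitSphereProd
  calc ∫⁻ z : Emn m n, f (‖z‖⁻¹ • z) * g ‖z‖
      = ∫⁻ z in ({0}ᶜ : Set (Emn m n)), f (‖z‖⁻¹ • z) * g ‖z‖ := by
        rw [restrict_compl_singleton]
    _ = ∫⁻ z : ({0}ᶜ : Set (Emn m n)), f (‖(z : Emn m n)‖⁻¹ • (z : Emn m n)) * g ‖(z : Emn m n)‖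
          ∂((volume : Measure (Emn m n)).comap Subtype.val) :=
        (lintegral_subtype_comap h0 _).symm
    _ = ∫⁻ z : ({0}ᶜ : Set (Emn m n)),
          (fun p : Metric.sphere (0 : Emn m n) 1 × Set.Ioi (0 : ℝ) => f p.1 * g p.2)
            (homeomorphUnitSphereProd (Emn m n) z)
          ∂((volume : Measure (Emn m n)).comap Subtype.val) := by
        refine lintegral_congr fun z => ?_
        simp only [homeomorphUnitSphereProd_apply_fst_coe, homeomorphUnitSphereProd_apply_snd_coe]
    _ = ∫⁻ p : Metric.sphere (0 : Emn m n) 1 × Set.Ioi (0 : ℝ), f p.1 * g p.2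
          ∂((volume : Measure (Emn m n)).toSphere.prod
            (Measure.volumeIoiPow (Module.finrank ℝ (Emn m n) - 1))) :=
        key.lintegral_comp_emb (Homeomorph.measurableEmbedding _)
          (fun p : Metric.sphere (0 : Emn m n) 1 × Set.Ioi (0 : ℝ) => f p.1 * g p.2)
    _ = _ := lintegral_prod_mul hf ((hg.comp measurable_subtype_coe).aemeasurable)

lemma aemeasurable_polar {m n : ℕ} (hm : 1 ≤ m) (hn : 1 ≤ n) (f : Emn m n → ℝ≥0∞)
    (hf : AEMeasurable (fun θ : Metric.sphere (0 : Emn m n) 1 => f θ)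
      (volume : Measure (Emn m n)).toSphere) :
    AEMeasurable (fun z : Emn m n => f (‖z‖⁻¹ • z)) (volume : Measure (Emn m n)) := by
  haveI := nontrivial_Emn hm hn
  have h0 : MeasurableSet ({0}ᶜ : Set (Emn m n)) := (measurableSet_singleton 0).compl
  have key := (volume : Measure (Emn m n)).measurePreserving_homeomorphUnitSphereProd
  have h1 : AEMeasurable (fun p : Metric.sphere (0 : Emn m n) 1 × Set.Ioi (0 : ℝ) => f p.1)
      ((volume : Measure (Emn m n)).toSphere.prod
        (Measure.volumeIoiPow (Module.finrank ℝ (Emn m n) - 1))) :=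
    hf.comp_quasiMeasurePreserving Measure.quasiMeasurePreserving_fst
  have h2 := (key.aemeasurable_comp_iff (Homeomorph.measurableEmbedding _)).2 h1
  have heq : ((fun p : Metric.sphere (0 : Emn m n) 1 × Set.Ioi (0 : ℝ) => f p.1) ∘
      (homeomorphUnitSphereProd (Emn m n)))
      = (fun z : Emn m n => f (‖z‖⁻¹ • z)) ∘ (Subtype.val : ({0}ᶜ : Set (Emn m n)) → Emn m n) := by
    funext z
    simp only [Function.comp_apply, homeomorphUnitSphereProd_apply_fst_coe]
  rw [heq] at h2
  have h4 : AEMeasurable (fun z : Emn m n => f (‖z‖⁻¹ • z))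
      (((volume : Measure (Emn m n)).comap Subtype.val).map
        (Subtype.val : ({0}ᶜ : Set (Emn m n)) → Emn m n)) :=
    ((MeasurableEmbedding.subtype_coe h0).aemeasurable_map_iff).2 h2
  rwa [map_comap_subtype_coe h0, restrict_compl_singleton] at h4

lemma ennreal_arith {k bh cc d p a q : ℝ≥0∞} (h1 : k * bh ≤ a) (h2 : p ≤ q) :
    k * bh * cc * d * p ≤ a * (cc * (d * q)) := by
  calc k * bh * cc * d * p = (k * bh) * (d * p) * cc := by ring
    _ ≤ a * (d * q) * cc := mul_le_mul' (mul_le_mul' h1 (mul_le_mul' le_rfl h2)) le_rfl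
    _ = a * (cc * (d * q)) := by ring

end AuxLemmas

set_option maxHeartbeats 1000000 in
/-- The key kernel estimate: for `Ω ∈ L¹(S^{mn-1})` and `j ≥ 0`,
`∫ |K⁰_j(y)| ∏_i log(2 + |y_i|) dy ≲ ‖Ω‖_{L¹(S^{mn-1})}`, where `K⁰_j = K⁰ ∗ β_{2^j}`
and `K⁰(y) = K(y) β̂(y)`. -/
theorem kernel_log_estimate
    (m n : ℕ) (hm : 1 ≤ m) (hn : 1 ≤ n)
    (η : SchwartzMap (Emn m n) ℂ)
    (hη1 : ∀ ξ : Emn m n, ‖ξ‖ ≤ 1 → 𝓕 (⇑η) ξ = 1)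
    (hη2 : ∀ ξ : Emn m n, 2 ≤ ‖ξ‖ → 𝓕 (⇑η) ξ = 0)
    (β : SchwartzMap (Emn m n) ℂ)
    (hβ : ∀ ξ : Emn m n, 𝓕 (⇑β) ξ = betaHat m n η ξ) :
    ∃ C : ℝ, 0 < C ∧
      ∀ Ω : Emn m n → ℝ, MemLp Ω 1 (sphereMeasure m n) →
        ∀ j : ℤ, 0 ≤ j →
          -- `K⁰_j = K⁰ ∗ β_{2^j}` with `K⁰(y) = K(y) β̂(y)` and `β_t(x) = t^{mn} β(t x)`
          ∫⁻ y : Emn m n,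
              (‖∫ z : Emn m n, ((kernel m n Ω z : ℝ) : ℂ) * betaHat m n η z *
                  (((((2 : ℝ) ^ j) ^ (m * n) : ℝ)) : ℂ) * β ((2 : ℝ) ^ j • (y - z))‖₊ : ℝ≥0∞) *
                ∏ i : Fin m, ENNReal.ofReal (Real.log (2 + ‖comp m n y i‖)) ≤
            ENNReal.ofReal C * eLpNorm Ω 1 (sphereMeasure m n) := by

  classical
  haveI := nontrivial_Emn hm hn
  have hd : Module.finrank ℝ (Emn m n) = m * n := by
    simp [finrank_euclideanSpace]
  -- constants independent of Ω and j
  set Bη : ℝ := ∫ v : Emn m n, ‖η v‖ with hBηdef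
  have hBη0 : 0 ≤ Bη := integral_nonneg fun v => norm_nonneg _
  set B : ℝ := 2 * Bη + 1 with hBdef
  have hB0 : (0:ℝ) < B := by positivity
  set Acof : ℝ≥0∞ := ENNReal.ofReal (B * 2 ^ (m * n)) with hAcofdef
  set gg : ℝ → ℝ≥0∞ := Set.indicator (Set.Icc (1/2 : ℝ) 2) (fun _ => Acof) with hggdef
  have hgg_meas : Measurable gg := measurable_const.indicator measurableSet_Icc
  have hgg_ne : ∀ r : ℝ, gg r ≠ ∞ := by
    intro r
    by_cases h : r ∈ Set.Icc (1/2 : ℝ) 2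
    · rw [hggdef, Set.indicator_of_mem h]; exact ENNReal.ofReal_ne_top
    · rw [hggdef, Set.indicator_of_notMem h]; exact ENNReal.zero_ne_top
  set Cg : ℝ≥0∞ :=
    ∫⁻ r : Set.Ioi (0:ℝ), gg r ∂(Measure.volumeIoiPow (Module.finrank ℝ (Emn m n) - 1))
    with hCgdef
  have h3pos : (0:ℝ) < 3 := by norm_num
  have hCg_ne : Cg ≠ ∞ := by
    have hb : ∀ r : Set.Ioi (0:ℝ), gg r ≤
        Set.indicator (Set.Iio (⟨3, h3pos⟩ : Set.Ioi (0:ℝ))) (fun _ => Acof) r := by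
      intro r
      by_cases h : (r : ℝ) ∈ Set.Icc (1/2 : ℝ) 2
      · have hr3 : r ∈ Set.Iio (⟨3, h3pos⟩ : Set.Ioi (0:ℝ)) := by
          have : (r : ℝ) < 3 := lt_of_le_of_lt h.2 (by norm_num)
          exact Set.mem_Iio.mpr (Subtype.coe_lt_coe.1 this)
        rw [hggdef, Set.indicator_of_mem h, Set.indicator_of_mem hr3]
      · rw [hggdef, Set.indicator_of_notMem h]
        exact zero_le
    have hle : Cg ≤ Acof * (Measure.volumeIoiPow (Module.finrank ℝ (Emn m n) - 1))
        (Set.Iio (⟨3, h3pos⟩ : Set.Ioi (0:ℝ))) := by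
      rw [hCgdef, ← lintegral_indicator_const measurableSet_Iio Acof]
      exact lintegral_mono hb
    refine ne_top_of_le_ne_top ?_ hle
    refine ENNReal.mul_ne_top ENNReal.ofReal_ne_top ?_
    rw [Measure.volumeIoiPow_apply_Iio]
    exact ENNReal.ofReal_ne_top
  set W : Emn m n → ℝ≥0∞ :=
    fun u => (‖β u‖₊ : ℝ≥0∞) * ENNReal.ofReal ((4 + ‖u‖) ^ m) with hWdef
  have hW_meas : Measurable W := by
    refine Measurable.mul (f := fun u => (‖β u‖₊ : ℝ≥0∞)) (g := fun u => ENNReal.ofReal ((4 + ‖u‖) ^ m)) ?_ ?_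
    · exact (β.continuous.measurable.nnnorm).coe_nnreal_ennreal
    · exact ((continuous_const.add continuous_norm).pow m).measurable.ennreal_ofReal
  set IW : ℝ≥0∞ := ∫⁻ u : Emn m n, W u with hIWdef
  have hIW_ne : IW ≠ ∞ := by
    have hb : ∀ u : Emn m n, W u ≤
        ENNReal.ofReal (8^m) * ENNReal.ofReal (‖β u‖ + ‖u‖^m * ‖β u‖) := by
      intro u
      have hx : (0:ℝ) ≤ ‖u‖ := norm_nonneg u
      have h1 : (4 + ‖u‖) ≤ 8 * max 1 ‖u‖ := by
        rcases le_total ‖u‖ 1 with h | h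
        · rw [max_eq_left h]; linarith
        · rw [max_eq_right h]; linarith
      have h2 : (4 + ‖u‖)^m ≤ 8^m * (1 + ‖u‖^m) := by
        calc (4 + ‖u‖)^m ≤ (8 * max 1 ‖u‖)^m := pow_le_pow_left₀ (by linarith) h1 m
          _ = 8^m * (max 1 ‖u‖)^m := mul_pow 8 (max 1 ‖u‖) m
          _ ≤ 8^m * (1 + ‖u‖^m) := by
              apply mul_le_mul_of_nonneg_left ?_ (by positivity)
              rcases le_total ‖u‖ 1 with h | h
              · rw [max_eq_left h, one_pow]
                have : (0:ℝ) ≤ ‖u‖^m := pow_nonneg hx m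
                linarith
              · rw [max_eq_right h]
                linarith
      calc W u = ENNReal.ofReal (‖β u‖ * (4 + ‖u‖)^m) := by
            rw [hWdef]
            rw [ENNReal.ofReal_mul (norm_nonneg _), ofReal_norm_eq_enorm, enorm_eq_nnnorm]
        _ ≤ ENNReal.ofReal (8^m * (‖β u‖ + ‖u‖^m * ‖β u‖)) := by
            apply ENNReal.ofReal_le_ofReal
            have := mul_le_mul_of_nonneg_left h2 (norm_nonneg (β u))
            nlinarith [norm_nonneg (β u), pow_nonneg hx m]
        _ = ENNReal.ofReal (8^m) * ENNReal.ofReal (‖β u‖ + ‖u‖^m * ‖β u‖) :=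
            ENNReal.ofReal_mul (by positivity)
    have hint : Integrable (fun u : Emn m n => ‖β u‖ + ‖u‖^m * ‖β u‖) volume :=
      (β.integrable.norm).add (β.integrable_pow_mul volume m)
    have hle : IW ≤ ENNReal.ofReal (8^m) *
        ∫⁻ u : Emn m n, ENNReal.ofReal (‖β u‖ + ‖u‖^m * ‖β u‖) := by
      rw [hIWdef, ← lintegral_const_mul' _ _ ENNReal.ofReal_ne_top]
      exact lintegral_mono hb
    refine ne_top_of_le_ne_top (ENNReal.mul_ne_top ENNReal.ofReal_ne_top ?_) hle
    have h2 : (∫⁻ u : Emn m n, ENNReal.ofReal (‖β u‖ + ‖u‖^m * ‖β u‖)) ≤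
        ∫⁻ u : Emn m n, (‖(‖β u‖ + ‖u‖^m * ‖β u‖)‖₊ : ℝ≥0∞) :=
      lintegral_mono fun u => Real.ofReal_le_enorm _
    exact ne_top_of_le_ne_top hint.hasFiniteIntegral.ne h2
  refine ⟨(Cg * IW).toReal + 1, by positivity, ?_⟩
  intro Ω hΩ j hj
  -- measurability of Ω
  have hΩmap : AEMeasurable (fun x : Emn m n => (‖Ω x‖₊ : ℝ≥0∞))
      (Measure.map (Subtype.val : Metric.sphere (0 : Emn m n) 1 → Emn m n)
        (volume : Measure (Emn m n)).toSphere) := by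
    have := hΩ.aestronglyMeasurable.enorm
    rwa [sphereMeasure] at this
  have hΩm : AEMeasurable (fun θ : Metric.sphere (0 : Emn m n) 1 => (‖Ω θ‖₊ : ℝ≥0∞))
      (volume : Measure (Emn m n)).toSphere :=
    ((MeasurableEmbedding.subtype_coe
      (isClosed_sphere : IsClosed (Metric.sphere (0 : Emn m n) 1)).measurableSet
      ).aemeasurable_map_iff).1 hΩmap
  have hSΩ : eLpNorm Ω 1 (sphereMeasure m n) =
      ∫⁻ θ : Metric.sphere (0 : Emn m n) 1, (‖Ω θ‖₊ : ℝ≥0∞)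
        ∂(volume : Measure (Emn m n)).toSphere := by
    rw [eLpNorm_one_eq_lintegral_enorm, sphereMeasure]
    exact lintegral_map' hΩmap measurable_subtype_coe.aemeasurable
  -- betaHat bounds
  have hBbound : ∀ ξ : Emn m n, (‖betaHat m n η ξ‖₊ : ℝ≥0∞) ≤ ENNReal.ofReal B := by
    intro ξ
    have h1 : ‖𝓕 (⇑η) ξ‖ ≤ Bη :=
      VectorFourier.norm_fourierIntegral_le_integral_norm _ _ _ _ _
    have h2 : ‖𝓕 (⇑η) ((2:ℝ) • ξ)‖ ≤ Bη :=
      VectorFourier.norm_fourierIntegral_le_integral_norm _ _ _ _ _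
    have hle : ‖betaHat m n η ξ‖ ≤ B := by
      have e : betaHat m n η ξ = 𝓕 (⇑η) ξ - 𝓕 (⇑η) ((2:ℝ) • ξ) := rfl
      rw [e, hBdef]
      calc ‖𝓕 (⇑η) ξ - 𝓕 (⇑η) ((2:ℝ) • ξ)‖ ≤ ‖𝓕 (⇑η) ξ‖ + ‖𝓕 (⇑η) ((2:ℝ) • ξ)‖ :=
          norm_sub_le _ _
        _ ≤ 2 * Bη + 1 := by linarith
    rw [← enorm_eq_nnnorm, ← ofReal_norm_eq_enorm]
    exact ENNReal.ofReal_le_ofReal hle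
  have hvanish : ∀ ξ : Emn m n, ‖ξ‖ ∉ Set.Icc (1/2 : ℝ) 2 → betaHat m n η ξ = 0 := by
    intro ξ hξ
    have e : betaHat m n η ξ = 𝓕 (⇑η) ξ - 𝓕 (⇑η) ((2:ℝ) • ξ) := rfl
    have h2ξ : ‖(2:ℝ) • ξ‖ = 2 * ‖ξ‖ := by
      rw [norm_smul, Real.norm_ofNat]
    rw [Set.mem_Icc, not_and_or, not_le, not_le] at hξ
    rcases hξ with h | h
    · rw [e, hη1 ξ (by linarith), hη1 ((2:ℝ) • ξ) (by rw [h2ξ]; linarith), sub_self]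
    · rw [e, hη2 ξ (by linarith), hη2 ((2:ℝ) • ξ) (by rw [h2ξ]; linarith), sub_self]
  -- kernel bound
  set A : Emn m n → ℝ≥0∞ :=
    fun z => (‖Ω (‖z‖⁻¹ • z)‖₊ : ℝ≥0∞) * gg ‖z‖ with hAdef
  have hGA : ∀ z : Emn m n,
      (‖((kernel m n Ω z : ℝ) : ℂ) * betaHat m n η z‖₊ : ℝ≥0∞) ≤ A z := by
    intro z
    by_cases hz : ‖z‖ ∈ Set.Icc (1/2 : ℝ) 2
    · have hz0 : (0:ℝ) < ‖z‖ := lt_of_lt_of_le (by norm_num) hz.1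
      have hker : (‖((kernel m n Ω z : ℝ) : ℂ)‖₊ : ℝ≥0∞) ≤
          (‖Ω (‖z‖⁻¹ • z)‖₊ : ℝ≥0∞) * ENNReal.ofReal (2 ^ (m*n)) := by
        rw [Complex.nnnorm_real]
        have e : kernel m n Ω z = Ω (‖z‖⁻¹ • z) * ‖z‖ ^ (-((m * n : ℕ) : ℝ)) := rfl
        have hr0 : (0:ℝ) ≤ ‖z‖ ^ (-((m * n : ℕ) : ℝ)) := Real.rpow_nonneg hz0.le _
        have hrle : ‖z‖ ^ (-((m * n : ℕ) : ℝ)) ≤ 2 ^ (m*n) := by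
          rw [Real.rpow_neg hz0.le, Real.rpow_natCast]
          have h1 : (1/2 : ℝ)^(m*n) ≤ ‖z‖^(m*n) := pow_le_pow_left₀ (by norm_num) hz.1 _
          have h2 : (0:ℝ) < (1/2:ℝ)^(m*n) := by positivity
          calc (‖z‖^(m*n))⁻¹ ≤ ((1/2:ℝ)^(m*n))⁻¹ := inv_anti₀ h2 h1
            _ = 2^(m*n) := by rw [one_div, inv_pow, inv_inv]
        calc (‖kernel m n Ω z‖₊ : ℝ≥0∞) = ENNReal.ofReal |kernel m n Ω z| :=
            Real.enorm_eq_ofReal_abs _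
          _ = ENNReal.ofReal (|Ω (‖z‖⁻¹ • z)| * (‖z‖ ^ (-((m * n : ℕ) : ℝ)))) := by
              rw [e, abs_mul, abs_of_nonneg hr0]
          _ ≤ ENNReal.ofReal (|Ω (‖z‖⁻¹ • z)| * 2^(m*n)) :=
              ENNReal.ofReal_le_ofReal (mul_le_mul_of_nonneg_left hrle (abs_nonneg _))
          _ = ENNReal.ofReal |Ω (‖z‖⁻¹ • z)| * ENNReal.ofReal (2^(m*n)) :=
              ENNReal.ofReal_mul (abs_nonneg _)
          _ = _ := by rw [← Real.enorm_eq_ofReal_abs, enorm_eq_nnnorm]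
      calc (‖((kernel m n Ω z : ℝ) : ℂ) * betaHat m n η z‖₊ : ℝ≥0∞)
          = (‖((kernel m n Ω z : ℝ) : ℂ)‖₊ : ℝ≥0∞) * (‖betaHat m n η z‖₊ : ℝ≥0∞) := by
            rw [nnnorm_mul, ENNReal.coe_mul]
        _ ≤ ((‖Ω (‖z‖⁻¹ • z)‖₊ : ℝ≥0∞) * ENNReal.ofReal (2^(m*n))) * ENNReal.ofReal B :=
            mul_le_mul' hker (hBbound z)
        _ = A z := by
            rw [hAdef]
            simp only []
            rw [hggdef, Set.indicator_of_mem hz, hAcofdef]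
            rw [mul_assoc, ← ENNReal.ofReal_mul (by positivity)]
            rw [mul_comm ((2:ℝ)^(m*n)) B]
    · rw [hvanish z hz, mul_zero, nnnorm_zero]
      simp
  have hA_meas : AEMeasurable A volume := by
    rw [hAdef]
    exact (aemeasurable_polar hm hn (fun x : Emn m n => (‖Ω x‖₊ : ℝ≥0∞)) hΩm).mul
      ((hgg_meas.comp measurable_norm).aemeasurable)
  have hAz_ne : ∀ z : Emn m n, A z ≠ ∞ := fun z =>
    ENNReal.mul_ne_top ENNReal.coe_ne_top (hgg_ne _)
  have hA_int : (∫⁻ z : Emn m n, A z) =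
      (∫⁻ θ : Metric.sphere (0 : Emn m n) 1, (‖Ω θ‖₊ : ℝ≥0∞)
        ∂(volume : Measure (Emn m n)).toSphere) * Cg :=
    lintegral_polar hm hn (fun x : Emn m n => (‖Ω x‖₊ : ℝ≥0∞)) gg hΩm hgg_meas
  -- the scaling constant
  set c : ℝ := ((2:ℝ)^j)^(m*n) with hcdef
  have hc0 : (0:ℝ) < c := by positivity
  have h2j : (1:ℝ) ≤ (2:ℝ)^j := one_le_zpow₀ one_le_two hj
  -- log product bound
  have hPy : ∀ (y z : Emn m n), ‖z‖ ≤ 2 →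
      (∏ i : Fin m, ENNReal.ofReal (Real.log (2 + ‖comp m n y i‖)))
        ≤ ENNReal.ofReal ((4 + ‖(2:ℝ)^j • (y - z)‖)^m) := by
    intro y z hz
    have hkey : ∀ i : Fin m, Real.log (2 + ‖comp m n y i‖) ≤ 4 + ‖(2:ℝ)^j • (y - z)‖ := by
      intro i
      have hlog : Real.log (2 + ‖comp m n y i‖) ≤ (2 + ‖comp m n y i‖) - 1 :=
        Real.log_le_sub_one_of_pos (by positivity)
      have h2 : ‖comp m n y i‖ ≤ ‖y‖ := norm_comp_le m n y i
      have h3 : ‖y‖ - ‖z‖ ≤ ‖y - z‖ := norm_sub_norm_le y z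
      have h4 : ‖y - z‖ ≤ ‖(2:ℝ)^j • (y - z)‖ := by
        rw [norm_smul, Real.norm_eq_abs, abs_of_pos (by positivity)]
        nlinarith [norm_nonneg (y - z)]
      linarith
    calc (∏ i : Fin m, ENNReal.ofReal (Real.log (2 + ‖comp m n y i‖)))
        ≤ ∏ _i : Fin m, ENNReal.ofReal (4 + ‖(2:ℝ)^j • (y - z)‖) :=
          Finset.prod_le_prod' fun i _ => ENNReal.ofReal_le_ofReal (hkey i)
      _ = ENNReal.ofReal (4 + ‖(2:ℝ)^j • (y - z)‖) ^ m := by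
          rw [Finset.prod_const]
          simp
      _ = ENNReal.ofReal ((4 + ‖(2:ℝ)^j • (y - z)‖)^m) :=
          (ENNReal.ofReal_pow (by positivity) m).symm
  -- step A : pointwise bound on the outer integrand
  have hstepA : ∀ y : Emn m n,
      (‖∫ z : Emn m n, ((kernel m n Ω z : ℝ) : ℂ) * betaHat m n η z *
          ((c : ℝ) : ℂ) * β ((2 : ℝ) ^ j • (y - z))‖₊ : ℝ≥0∞) *
        ∏ i : Fin m, ENNReal.ofReal (Real.log (2 + ‖comp m n y i‖)) ≤
      ∫⁻ z : Emn m n, A z * (ENNReal.ofReal c * W ((2:ℝ)^j • (y - z))) := by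
    intro y
    have hPne : (∏ i : Fin m, ENNReal.ofReal (Real.log (2 + ‖comp m n y i‖))) ≠ ∞ :=
      (ENNReal.prod_lt_top (fun i _ => ENNReal.ofReal_lt_top)).ne
    refine le_trans (mul_le_mul_left (enorm_integral_le_lintegral_enorm _) _) ?_
    rw [← lintegral_mul_const' _ _ hPne]
    refine lintegral_mono fun z => ?_
    by_cases hz : ‖z‖ ∈ Set.Icc (1/2 : ℝ) 2
    · have hzP := hPy y z hz.2
      have hcnorm : (‖((c : ℝ) : ℂ)‖₊ : ℝ≥0∞) = ENNReal.ofReal c := by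
        rw [Complex.nnnorm_real]; exact Real.enorm_eq_ofReal hc0.le
      have hGA' := hGA z
      rw [nnnorm_mul, ENNReal.coe_mul] at hGA'
      simp only [enorm_eq_nnnorm, nnnorm_mul, ENNReal.coe_mul, hWdef]
      rw [hcnorm]
      exact ennreal_arith hGA' hzP
    · rw [hvanish z hz]
      simp
  -- scaling identity
  have hscale : ∀ z : Emn m n,
      (∫⁻ y : Emn m n, ENNReal.ofReal c * W ((2:ℝ)^j • (y - z))) = IW := by
    intro z
    rw [lintegral_const_mul' _ _ ENNReal.ofReal_ne_top]
    have ha0 : ((2:ℝ)^j) ≠ 0 := by positivity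
    have h1 : (∫⁻ y : Emn m n, W ((2:ℝ)^j • (y - z))) = ∫⁻ u : Emn m n, W ((2:ℝ)^j • u) := by
      have := lintegral_add_right_eq_self (μ := (volume : Measure (Emn m n)))
        (fun u => W ((2:ℝ)^j • u)) (-z)
      simpa [sub_eq_add_neg] using this
    have h2 : (∫⁻ u : Emn m n, W ((2:ℝ)^j • u)) =
        ENNReal.ofReal |((((2:ℝ)^j)^(m*n) : ℝ))⁻¹| * IW := by
      have hmap := Measure.map_addHaar_smul (volume : Measure (Emn m n)) ha0
      rw [hd] at hmap
      have := lintegral_map (μ := (volume : Measure (Emn m n))) (f := W)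
        (g := fun x : Emn m n => ((2:ℝ)^j) • x) hW_meas
        (measurable_const_smul _)
      rw [hmap, lintegral_smul_measure] at this
      rw [← this, hIWdef, smul_eq_mul]
    rw [h1, h2]
    calc ENNReal.ofReal c * (ENNReal.ofReal |((((2:ℝ)^j)^(m*n) : ℝ))⁻¹| * IW)
        = (ENNReal.ofReal (c * ((((2:ℝ)^j)^(m*n) : ℝ))⁻¹)) * IW := by
          rw [abs_of_nonneg (by positivity), ← mul_assoc, ← ENNReal.ofReal_mul hc0.le]
      _ = IW := by
          rw [hcdef, mul_inv_cancel₀ (by positivity), ENNReal.ofReal_one, one_mul]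
  -- measurability for Tonelli
  have hprod : AEMeasurable
      (Function.uncurry fun (y z : Emn m n) =>
        A z * (ENNReal.ofReal c * W ((2:ℝ)^j • (y - z))))
      ((volume : Measure (Emn m n)).prod (volume : Measure (Emn m n))) := by
    have h1 : AEMeasurable (fun p : Emn m n × Emn m n => A p.2)
        ((volume : Measure (Emn m n)).prod (volume : Measure (Emn m n))) :=
      hA_meas.comp_quasiMeasurePreserving Measure.quasiMeasurePreserving_snd
    have h2 : Measurable (fun p : Emn m n × Emn m n =>
        ENNReal.ofReal c * W ((2:ℝ)^j • (p.1 - p.2))) :=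
      (hW_meas.comp ((measurable_fst.sub measurable_snd).const_smul ((2:ℝ)^j))).const_mul _
    exact h1.mul h2.aemeasurable
  -- put everything together
  have hfin : Cg * IW ≠ ∞ := ENNReal.mul_ne_top hCg_ne hIW_ne
  have hCle : Cg * IW ≤ ENNReal.ofReal ((Cg * IW).toReal + 1) := by
    conv_lhs => rw [← ENNReal.ofReal_toReal hfin]
    exact ENNReal.ofReal_le_ofReal (by linarith)
  calc (∫⁻ y : Emn m n,
        (‖∫ z : Emn m n, ((kernel m n Ω z : ℝ) : ℂ) * betaHat m n η z *
            ((c : ℝ) : ℂ) * β ((2 : ℝ) ^ j • (y - z))‖₊ : ℝ≥0∞) *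
          ∏ i : Fin m, ENNReal.ofReal (Real.log (2 + ‖comp m n y i‖)))
      ≤ ∫⁻ y : Emn m n, ∫⁻ z : Emn m n,
          A z * (ENNReal.ofReal c * W ((2:ℝ)^j • (y - z))) :=
        lintegral_mono hstepA
    _ = ∫⁻ z : Emn m n, ∫⁻ y : Emn m n,
          A z * (ENNReal.ofReal c * W ((2:ℝ)^j • (y - z))) :=
        lintegral_lintegral_swap hprod
    _ = ∫⁻ z : Emn m n, A z * IW := by
        refine lintegral_congr fun z => ?_
        rw [lintegral_const_mul' _ _ (hAz_ne z), hscale z]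
    _ = (∫⁻ z : Emn m n, A z) * IW := lintegral_mul_const' _ _ hIW_ne
    _ = ((∫⁻ θ : Metric.sphere (0 : Emn m n) 1, (‖Ω θ‖₊ : ℝ≥0∞)
          ∂(volume : Measure (Emn m n)).toSphere) * Cg) * IW := by rw [hA_int]
    _ = (Cg * IW) * (∫⁻ θ : Metric.sphere (0 : Emn m n) 1, (‖Ω θ‖₊ : ℝ≥0∞)
          ∂(volume : Measure (Emn m n)).toSphere) := by ring
    _ ≤ ENNReal.ofReal ((Cg * IW).toReal + 1) * eLpNorm Ω 1 (sphereMeasure m n) := by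
        rw [hSΩ]
        exact mul_le_mul_left hCle _


end
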